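/- arXiv:math/0009045 — 2 statements merged into one kernel-verified Lean document; each statement's English description precedes it below -/
import Mathlib

section
/- Specker's theorem: for every homomorphism h : ℤ^ω → ℤ there exist n ∈ ℕ and integers c_0,…,c_{n-1} such that h(x) = Σ_{i<n} c_i x_i for all x ∈ ℤ^ω; equivalently, h factors through the projection onto a finite sub-product. The same holds with ℤ replaced as codomain by any free abelian group. -/
/-!
If `h` kills every unit vector `e i`, then `h = 0`: write `x i = 2 ^ i * s i + 3 ^ i * t i`.
Modulo the image of a vector divisible by `2 ^ n`, `h (fun i => 2 ^ i * s i)` is a finite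
combination of the `h (e i) = 0`, so it is divisible by every `2 ^ n` and vanishes in `ℤ`
(coordinatewise in a free group); likewise for `3`. It remains to see that `h (e i) ≠ 0` for only
finitely many `i`.

For `G = ℤ`, suppose `A = {i | h (e i) ≠ 0}` is infinite and put `a k = ∏ i < k, (|h (e i)| + 1)`.
The uncountably many vectors `S.indicator a` with `S ⊆ A` cannot have distinct images, so some
nonzero `z = S.indicator a - T.indicator a` has `h z = 0`. If `k` is its first nonzero index, then
`0 = h z ≡ ± a k * h (e k) [ZMOD a (k + 1)]`, impossible since `0 < |a k * h (e k)| < a (k + 1)`.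
For free `G`, each coordinate of `h (e i)` vanishes for almost all `i`, so infinitely many nonzero
`h (e i)` contain a sequence with pairwise disjoint supports; a functional taking a sum of squares
of coefficients on each of them contradicts the case `G = ℤ`.
-/

open Finset

theorem Int.eq_zero_of_forall_pow_dvd {p m : ℤ} (hp : p.natAbs ≠ 1)
    (h : ∀ n : ℕ, p ^ n ∣ m) : m = 0 := by
  by_contra hm
  obtain ⟨n, hn⟩ := Int.finiteMultiplicity_iff.2 ⟨hp, hm⟩
  exact hn (h _)

theorem Set.Infinite.not_countable_powerset {α : Type*} {s : Set α} (hs : s.Infinite) :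
    ¬ (𝒫 s).Countable := by
  rw [← Cardinal.le_aleph0_iff_set_countable, Cardinal.mk_powerset, not_le]
  have := hs.to_subtype
  exact (Cardinal.infinite_iff.1 this).trans_lt (Cardinal.cantor _)

theorem Module.Basis.exists_forall_apply_ne_zero_of_pairwise_disjoint_support
    {ι κ R M : Type*} [CommRing R] [LinearOrder R] [IsStrictOrderedRing R] [AddCommGroup M]
    [Module R M] (b : Module.Basis ι R M) {v : κ → M} (hv : ∀ k, v k ≠ 0)
    (hd : Pairwise fun k l => Disjoint (b.repr (v k)).support (b.repr (v l)).support) :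
    ∃ φ : M →ₗ[R] R, ∀ k, φ (v k) ≠ 0 := by
  -- `ψ` agrees with `b.repr (v k)` on its support, so `φ (v k)` is a sum of squares
  set ψ : ι → R := fun j => ∑ᶠ k, b.repr (v k) j
  have hψ : ∀ k, ∀ j ∈ (b.repr (v k)).support, ψ j = b.repr (v k) j := fun k j hj =>
    finsum_eq_single _ k fun l hl =>
      Finsupp.notMem_support_iff.1 (Finset.disjoint_left.1 (hd hl.symm) hj)
  refine ⟨b.constr R ψ, fun k => ?_⟩
  rw [b.constr_apply, Finsupp.sum]
  refine (Finset.sum_pos (fun j hj => ?_) ?_).ne'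
  · rw [hψ k j hj, smul_eq_mul]
    exact mul_self_pos.2 (Finsupp.mem_support_iff.1 hj)
  · simpa [Finsupp.support_nonempty_iff] using hv k

namespace Specker

variable {G : Type*} [AddCommGroup G]

theorem map_eq_sum_add_zsmul (h : (ℕ → ℤ) →+ G) (x : ℕ → ℤ) (N : ℕ) {d : ℤ}
    (hd : ∀ i, N ≤ i → d ∣ x i) :
    ∃ g, h x = ∑ i ∈ range N, x i • h (Pi.single i 1) + d • g := by
  set y : ℕ → ℤ := fun i => if i < N then 0 else x i / d
  have hx : x = ∑ i ∈ range N, x i • Pi.single i 1 + d • y := by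
    funext j
    by_cases hj : j < N
    · simp [y, hj, Finset.sum_apply, Pi.single_apply]
    · simp [y, hj, Finset.sum_apply, Pi.single_apply,
        Int.mul_ediv_cancel' (hd j (not_lt.1 hj))]
  refine ⟨h y, ?_⟩
  conv_lhs => rw [hx]
  simp only [map_add, map_sum, map_zsmul]

theorem eq_zero_of_forall_map_single_eq_zero_int (h : (ℕ → ℤ) →+ ℤ)
    (hz : ∀ i, h (Pi.single i 1) = 0) : h = 0 := by
  have weighted : ∀ p : ℤ, p.natAbs ≠ 1 → ∀ y : ℕ → ℤ, h (fun i => p ^ i * y i) = 0 := by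
    refine fun p hp y => Int.eq_zero_of_forall_pow_dvd hp fun n => ?_
    obtain ⟨g, hg⟩ := map_eq_sum_add_zsmul h _ n (d := p ^ n)
      fun i hi => (pow_dvd_pow p hi).mul_right _
    rw [hg]
    simp [hz]
  -- every integer sequence is a sum of one divisible termwise by `2 ^ i` and one by `3 ^ i`
  have bezout : ∀ i, ∃ s t : ℤ, s * 2 ^ i + t * 3 ^ i = 1 := fun i =>
    (show IsCoprime (2 : ℤ) 3 by norm_num [Int.isCoprime_iff_gcd_eq_one]).pow
  choose s t hst using bezout
  ext x
  have hx : x = (fun i => 2 ^ i * (s i * x i)) + fun i => 3 ^ i * (t i * x i) := by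
    funext i
    simp only [Pi.add_apply]
    linear_combination (-x i) * hst i
  rw [hx, map_add, weighted 2 (by norm_num), weighted 3 (by norm_num), add_zero]
  rfl

theorem eq_zero_of_forall_map_single_eq_zero [Module.Free ℤ G] (h : (ℕ → ℤ) →+ G)
    (hz : ∀ i, h (Pi.single i 1) = 0) : h = 0 := by
  set b := Module.Free.chooseBasis ℤ G
  ext x
  refine b.ext_elem fun j => ?_
  have := eq_zero_of_forall_map_single_eq_zero_int ((b.coord j).toAddMonoidHom.comp h)
    fun i => by simp [hz]
  simpa using DFunLike.congr_fun this x

theorem dvd_mul_map_single_of_map_eq_zero (h : (ℕ → ℤ) →+ ℤ) {z : ℕ → ℤ} {k : ℕ} {d : ℤ}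
    (hz : h z = 0) (hlt : ∀ i < k, z i = 0) (hd : ∀ i, k < i → d ∣ z i) :
    d ∣ z k * h (Pi.single k 1) := by
  obtain ⟨g, hg⟩ := map_eq_sum_add_zsmul h z (k + 1) hd
  rw [hz, sum_range_succ, sum_eq_zero fun i hi => by rw [hlt i (mem_range.1 hi), zero_smul],
    zero_add, smul_eq_mul, smul_eq_mul] at hg
  exact ⟨-g, by linarith⟩

theorem finite_setOf_map_single_ne_zero_int (h : (ℕ → ℤ) →+ ℤ) :
    {i | h (Pi.single i 1) ≠ 0}.Finite := by
  classical
  set A := {i | h (Pi.single i 1) ≠ 0}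
  set c : ℕ → ℤ := fun i => h (Pi.single i 1)
  refine Set.not_infinite.1 fun hA => ?_
  set a : ℕ → ℤ := fun k => ∏ i ∈ range k, (|c i| + 1)
  have a_pos : ∀ k, 0 < a k := fun k => prod_pos fun i _ => by positivity
  have a_dvd : ∀ {k l}, k ≤ l → a k ∣ a l := fun hkl =>
    prod_dvd_prod_of_subset _ _ _ (range_subset_range.2 hkl)
  -- `S ↦ h (S.indicator a)` cannot be injective on the uncountably many subsets of `A`
  obtain ⟨S, hS, T, hT, hST, hne⟩ :
      ∃ S ∈ 𝒫 A, ∃ T ∈ 𝒫 A, h (S.indicator a) = h (T.indicator a) ∧ S ≠ T := by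
    by_contra! hinj
    exact hA.not_countable_powerset
      ((Set.mapsTo_univ _ _).countable_of_injOn hinj Set.countable_univ)
  have hex : ∃ i, i ∈ symmDiff S T := Set.symmDiff_nonempty.2 hne
  obtain ⟨k, hk, hmin⟩ : ∃ k ∈ symmDiff S T, ∀ i < k, i ∉ symmDiff S T :=
    ⟨Nat.find hex, Nat.find_spec hex, fun _ => Nat.find_min hex⟩
  set z := S.indicator a - T.indicator a
  have hzk : |z k| = a k := by
    rcases Set.mem_symmDiff.1 hk with ⟨hs, ht⟩ | ⟨ht, hs⟩ <;>
      simp [z, hs, ht, abs_of_pos (a_pos k)]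
  have hck : c k ≠ 0 := by
    rcases Set.mem_symmDiff.1 hk with ⟨hs, -⟩ | ⟨ht, -⟩
    exacts [hS hs, hT ht]
  have indicator_dvd : ∀ (U : Set ℕ) {i}, k < i → a (k + 1) ∣ U.indicator a i :=
    fun U i hi => by by_cases hU : i ∈ U <;> simp [hU, a_dvd hi]
  have hdvd : a (k + 1) ∣ z k * c k := by
    refine dvd_mul_map_single_of_map_eq_zero h (by simp [z, hST]) (fun i hi => ?_)
      fun i hi => dvd_sub (indicator_dvd S hi) (indicator_dvd T hi)
    have := hmin i hi
    rw [Set.mem_symmDiff] at this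
    by_cases hs : i ∈ S <;> by_cases ht : i ∈ T <;> simp_all [z]
  have hlt : |z k * c k| < a (k + 1) := by
    rw [abs_mul, hzk, show a (k + 1) = a k * (|c k| + 1) from prod_range_succ _ _]
    exact mul_lt_mul_of_pos_left (lt_add_one _) (a_pos k)
  exact mul_ne_zero (abs_pos.1 (hzk ▸ a_pos k)) hck (Int.eq_zero_of_abs_lt_dvd hdvd hlt)

theorem finite_setOf_map_single_ne_zero [Module.Free ℤ G] (h : (ℕ → ℤ) →+ G) :
    {i | h (Pi.single i 1) ≠ 0}.Finite := by
  set b := Module.Free.chooseBasis ℤ G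
  set c : ℕ → _ := fun i => b.repr (h (Pi.single i 1))
  have coord_finite : ∀ j, {i | c i j ≠ 0}.Finite := fun j =>
    finite_setOf_map_single_ne_zero_int ((b.coord j).toAddMonoidHom.comp h)
  refine Set.not_infinite.1 fun hA => ?_
  have : Std.Symm fun i i' => Disjoint (c i).support (c i').support :=
    ⟨fun _ _ hd => hd.symm⟩
  obtain ⟨f, hf, hdisj⟩ :=
    exists_seq_of_forall_finset_exists' (fun i => h (Pi.single i 1) ≠ 0)
      (fun i i' => Disjoint (c i).support (c i').support) fun s _ => by
    set J := s.biUnion fun i => (c i).support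
    have hJ : (⋃ j ∈ J, {i | c i j ≠ 0}).Finite :=
      J.finite_toSet.biUnion fun j _ => coord_finite j
    obtain ⟨y, hy, hyJ⟩ := (hA.sdiff hJ).nonempty
    refine ⟨y, hy, fun x hx => Finset.disjoint_left.2 fun j hj hjy => hyJ ?_⟩
    exact Set.mem_biUnion (Finset.mem_biUnion.2 ⟨x, hx, hj⟩) (Finsupp.mem_support_iff.1 hjy)
  obtain ⟨φ, hφ⟩ := b.exists_forall_apply_ne_zero_of_pairwise_disjoint_support
    (v := fun k => h (Pi.single (f k) 1)) hf hdisj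
  have f_inj : f.Injective := fun m n hmn => by
    by_contra hne
    have := hdisj hne
    simp [Function.onFun, hmn, c] at this
    exact hf n this
  refine (Set.infinite_range_of_injective f_inj).mono ?_
    (finite_setOf_map_single_ne_zero_int (φ.toAddMonoidHom.comp h))
  rintro _ ⟨k, rfl⟩
  exact hφ k

theorem exists_eq_sum_range [Module.Free ℤ G] (h : (ℕ → ℤ) →+ G) :
    ∃ n, ∀ x, h x = ∑ i ∈ range n, x i • h (Pi.single i 1) := by
  obtain ⟨N, hN⟩ := (finite_setOf_map_single_ne_zero h).bddAbove
  refine ⟨N + 1, fun x => ?_⟩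
  set p := ∑ i ∈ range (N + 1),
    (zmultiplesHom G (h (Pi.single i 1))).comp (Pi.evalAddMonoidHom (fun _ => ℤ) i)
  have : h - p = 0 := eq_zero_of_forall_map_single_eq_zero _ fun j => by
    by_cases hj : j < N + 1
    · simp [p, Pi.single_apply, hj]
    · have : h (Pi.single j 1) = 0 := by
        by_contra hne
        exact hj (Nat.lt_succ_of_le (hN hne))
      simp [p, Pi.single_apply, hj, this]
  simpa [p, sub_eq_zero] using DFunLike.congr_fun this x

end Specker

/-- (Specker) Every homomorphism `h : ℤ^ω →+ ℤ` is given by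
`h x = ∑_{i<n} c i * x i` for some `n` and integers `c i`; moreover every homomorphism
from `ℤ^ω` to a free abelian group factors through a finite sub-product. -/
theorem stmt_15 :
    (∀ h : (ℕ → ℤ) →+ ℤ, ∃ (n : ℕ) (c : ℕ → ℤ),
      ∀ x : ℕ → ℤ, h x = ∑ i ∈ Finset.range n, c i * x i) ∧
    (∀ (G : Type u) (_ : AddCommGroup G), ∀ (_ : Module.Free ℤ G),
      ∀ h : (ℕ → ℤ) →+ G, ∃ (n : ℕ) (hbar : (Fin n → ℤ) →+ G),
        ∀ x : ℕ → ℤ, h x = hbar (fun i => x i.1)) := by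
  refine ⟨fun h => ?_, fun G _ _ h => ?_⟩
  · obtain ⟨n, hn⟩ := Specker.exists_eq_sum_range h
    exact ⟨n, fun i => h (Pi.single i 1), fun x => by simp [hn x, mul_comm]⟩
  · obtain ⟨n, hn⟩ := Specker.exists_eq_sum_range h
    refine ⟨n, (Fintype.linearCombination ℤ fun i : Fin n => h (Pi.single i 1)).toAddMonoidHom,
      fun x => ?_⟩
    simp [hn x, Fintype.linearCombination_apply,
      Fin.sum_univ_eq_sum_range (fun i => x i • h (Pi.single i 1))]
end

section
/- Let h : ℤ^ω → ℤ be a group homomorphism that vanishes on the direct sum ⊕_ω ℤ. Then h = 0. (Key lemma toward Specker's theorem.) -/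
/-!
For `|b| ≥ 2`, the sequence `(b ^ k * a k)` agrees with `b ^ n` times the sequence
`(b ^ (k - n) * a k)` outside `{0, …, n - 1}`, so its image under `h` is divisible by every
power of `b` and hence vanishes. Since `2 ^ k` and `3 ^ k` are coprime, every sequence is the
sum of such a sequence for `b = 2` and one for `b = 3`.
-/

theorem Int.eq_zero_of_forall_pow_dvd_s17 {b c : ℤ} (hb : b.natAbs ≠ 1) (hdvd : ∀ n : ℕ, b ^ n ∣ c) :
    c = 0 := by
  by_contra hc
  obtain ⟨n, hn⟩ := Int.finiteMultiplicity_iff.2 ⟨hb, hc⟩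
  exact hn (hdvd (n + 1))

theorem AddMonoidHom.map_pow_mul_eq_zero (h : (ℕ → ℤ) →+ ℤ)
    (hvan : ∀ x : ℕ → ℤ, (Function.support x).Finite → h x = 0)
    {b : ℤ} (hb : b.natAbs ≠ 1) (a : ℕ → ℤ) :
    h (fun k => b ^ k * a k) = 0 := by
  refine Int.eq_zero_of_forall_pow_dvd_s17 hb fun n => ⟨h fun k => b ^ (k - n) * a k, ?_⟩
  have hdiff : (Function.support
      ((fun k => b ^ k * a k) - b ^ n • fun k => b ^ (k - n) * a k)).Finite := by
    refine (Set.finite_Iio n).subset fun k hk => ?_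
    by_contra hnk
    refine hk ?_
    simp only [Pi.sub_apply, Pi.smul_apply, smul_eq_mul, ← mul_assoc, ← pow_add,
      Nat.add_sub_cancel' (not_lt.1 hnk), sub_self]
  rw [← smul_eq_mul, ← map_zsmul, ← sub_eq_zero, ← map_sub]
  exact hvan _ hdiff

/-- A homomorphism `ℤ^ω →+ ℤ` vanishing on the direct sum `⊕_ω ℤ`
(the finitely supported sequences) is zero. -/
theorem stmt_17 (h : (ℕ → ℤ) →+ ℤ)
    (hvan : ∀ x : ℕ → ℤ, (Function.support x).Finite → h x = 0) :
    h = 0 := by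
  ext x
  choose u v huv using fun k : ℕ => (by norm_num : IsCoprime (2 : ℤ) 3).pow (m := k) (n := k)
  have hdecomp : x = (fun k => 2 ^ k * (u k * x k)) + (fun k => 3 ^ k * (v k * x k)) := by
    funext k
    rw [Pi.add_apply]
    linear_combination (-x k) * huv k
  rw [AddMonoidHom.zero_apply, hdecomp, map_add, h.map_pow_mul_eq_zero hvan (by decide),
    h.map_pow_mul_eq_zero hvan (by decide), add_zero]
end
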